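/- arXiv:2503.17160 — 5 statements merged into one kernel-verified Lean document; each statement's English description precedes it below -/
import Mathlib

section
/- For any finite graph G, the simplex graph S(G) is a median graph. -/
open SimpleGraph

/-- The hypercube graph `Q_n` on vertex set `{0,1}^n`. -/
def cubeGraph (n : ℕ) : SimpleGraph (Fin n → Bool) where
  Adj a b := (Finset.univ.filter fun i => a i ≠ b i).card = 1
  symm := by
    constructor
    intro a b h
    have hset : (Finset.univ.filter fun i => b i ≠ a i) =
        (Finset.univ.filter fun i => a i ≠ b i) := by
      apply Finset.filter_congr; intro i _; exact ne_comm
    rw [hset]; exact h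
  loopless := by constructor; intro a h; simp at h

/-- The simplex graph `S(G)`: vertices are the cliques of `G` (including `∅`),
two cliques adjacent iff they differ in exactly one vertex. -/
noncomputable def simplexGraph {V : Type*} (G : SimpleGraph V) :
    SimpleGraph {s : Finset V // G.IsClique (↑s : Set V)} := by
  classical
  exact
    { Adj := fun a b => (symmDiff a.1 b.1).card = 1
      symm := by constructor; intro a b h; rwa [symmDiff_comm]
      loopless := by constructor; intro a h; simp [symmDiff_self] at h }

/-- A median graph: connected and every triple of vertices has a unique median. -/
def IsMedianGraph {V : Type*} (G : SimpleGraph V) : Prop :=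
  G.Connected ∧ ∀ u v w : V, ∃! x : V,
    G.dist u x + G.dist x v = G.dist u v ∧
    G.dist u x + G.dist x w = G.dist u w ∧
    G.dist v x + G.dist x w = G.dist v w

/-- `f` is an isometric embedding of `G` into the hypercube `Q_n`
(injective, induced, and distance preserving). -/
def IsIsometricEmbedding {V : Type*} (G : SimpleGraph V) (n : ℕ) (f : V → Fin n → Bool) : Prop :=
  Function.Injective f ∧
    (∀ u v, G.Adj u v ↔ (cubeGraph n).Adj (f u) (f v)) ∧
    (∀ u v, G.dist u v = (cubeGraph n).dist (f u) (f v))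

/-- A partial cube: a graph isomorphic to an isometric subgraph of a hypercube. -/
def IsPartialCube {V : Type*} (G : SimpleGraph V) : Prop :=
  ∃ n f, IsIsometricEmbedding G n f

/-- A daisy cube: an isometric subgraph of a hypercube whose vertex set is
downward closed for the coordinatewise order. -/
def IsDaisyCube {V : Type*} (G : SimpleGraph V) : Prop :=
  ∃ n f, IsIsometricEmbedding G n f ∧
    ∀ (u : V) (b : Fin n → Bool), (∀ i, b i ≤ f u i) → ∃ w, f w = b

/-- The isometric dimension of `G`. -/
noncomputable def idim {V : Type*} (G : SimpleGraph V) : ℕ :=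
  sInf {n | ∃ f, IsIsometricEmbedding G n f}

/-- The Djoković–Winkler relation `Θ` on (unordered) edges. -/
def ThetaE {V : Type*} (G : SimpleGraph V) (e f : Sym2 V) : Prop :=
  ∃ u v x y, e = s(u, v) ∧ f = s(x, y) ∧
    G.dist u x + G.dist v y ≠ G.dist u y + G.dist v x

/-- The halfspace `W_{uv}`. -/
def Wset {V : Type*} (G : SimpleGraph V) (u v : V) : Set V :=
  {w | G.dist u w < G.dist v w}

/-- The set `U_{uv}` of vertices of `W_{uv}` incident with an edge of `F_{uv}`. -/
def Uset {V : Type*} (G : SimpleGraph V) (u v : V) : Set V :=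
  {w | w ∈ Wset G u v ∧ ∃ b ∈ Wset G v u, G.Adj w b}

/-- The Θ-classes of the edges `uv` and `xy` cross: all four intersections of
halfspaces are nonempty. -/
def Cross {V : Type*} (G : SimpleGraph V) (u v x y : V) : Prop :=
  (Wset G u v ∩ Wset G x y).Nonempty ∧ (Wset G u v ∩ Wset G y x).Nonempty ∧
  (Wset G v u ∩ Wset G x y).Nonempty ∧ (Wset G v u ∩ Wset G y x).Nonempty

/-- A set of vertices is convex if it contains every geodesic between its points. -/
def ConvexSet {V : Type*} (G : SimpleGraph V) (S : Set V) : Prop :=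
  ∀ u ∈ S, ∀ v ∈ S, ∀ p : G.Walk u v, p.length = G.dist u v → ∀ w ∈ p.support, w ∈ S

/-- The cycle graph on `ZMod m` (for `m ≥ 3`). -/
def cycG (m : ℕ) : SimpleGraph (ZMod m) where
  Adj i j := i ≠ j ∧ (j = i + 1 ∨ i = j + 1)
  symm := by constructor; rintro i j ⟨h, h'⟩; exact ⟨h.symm, h'.symm⟩
  loopless := by constructor; rintro i ⟨h, _⟩; exact h rfl

/-!
In `S(G)` the distance between cliques `a` and `b` is `#(a ∆ b)`: every edge changes the
symmetric difference by one vertex, and `a` is joined to `b` by deleting the vertices of `a \ b`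
one at a time and then adding those of `b \ a`. Hence `x` lies on a geodesic from `a` to `b`
iff `a ∩ b ⊆ x ⊆ a ∪ b`, and the only set between each pair of `a, b, c` is their lattice median
`(a ∩ b) ∪ (a ∩ c) ∪ (b ∩ c)`. It is again a clique, since any two of its vertices lie together
in one of `a, b, c`.
-/

open scoped symmDiff

namespace Finset

variable {α : Type*} [DecidableEq α]

lemma card_symmDiff_add_two_mul_card_inter (s t : Finset α) :
    #(s ∆ t) + 2 * #(s ∩ t) = #s + #t := by
  rw [symmDiff_eq_sup_sdiff_inf, card_sdiff_of_subset (inf_le_sup (a := s) (b := t)),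
    ← card_union_add_card_inter s t]
  have : #(s ∩ t) ≤ #(s ∪ t) := card_le_card inter_subset_union
  simp only [sup_eq_union, inf_eq_inter]
  omega

lemma card_symmDiff_le_add (a b c : Finset α) : #(a ∆ c) ≤ #(a ∆ b) + #(b ∆ c) :=
  (card_le_card (symmDiff_triangle a b c)).trans (card_union_le _ _)

lemma disjoint_symmDiff_symmDiff_iff {a b x : Finset α} :
    Disjoint (a ∆ x) (x ∆ b) ↔ a ∩ b ⊆ x ∧ x ⊆ a ∪ b := by
  simp only [disjoint_left, subset_iff, mem_symmDiff, mem_inter, mem_union]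
  constructor
  · intro h
    exact ⟨fun v hv => by_contra fun hx => h (.inl ⟨hv.1, hx⟩) (.inr ⟨hv.2, hx⟩),
      fun v hx => by_contra fun hv => h (.inr ⟨hx, fun ha => hv (.inl ha)⟩)
        (.inl ⟨hx, fun hb => hv (.inr hb)⟩)⟩
  · rintro ⟨hlo, hhi⟩ v hax hxb
    have := @hlo v
    have := @hhi v
    tauto

lemma card_symmDiff_add_card_symmDiff_eq_iff {a b x : Finset α} :
    #(a ∆ x) + #(x ∆ b) = #(a ∆ b) ↔ a ∩ b ⊆ x ∧ x ⊆ a ∪ b := by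
  have hab : (a ∆ x) ∆ (x ∆ b) = a ∆ b := by
    rw [symmDiff_assoc, symmDiff_symmDiff_cancel_left]
  have hdisj : Disjoint (a ∆ x) (x ∆ b) ↔ #((a ∆ x) ∩ (x ∆ b)) = 0 :=
    disjoint_iff_inter_eq_empty.trans card_eq_zero.symm
  rw [← disjoint_symmDiff_symmDiff_iff, hdisj, ← hab]
  have := card_symmDiff_add_two_mul_card_inter (a ∆ x) (x ∆ b)
  omega

end Finset

section Median

variable {α : Type*} [DistribLattice α]

def median (a b c : α) : α := a ⊓ b ⊔ a ⊓ c ⊔ b ⊓ c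

lemma median_eq_inf_sup (a b c : α) : median a b c = (a ⊔ b) ⊓ (a ⊔ c) ⊓ (b ⊔ c) := by
  rw [← sup_inf_left, inf_sup_right, inf_sup_left, median,
    inf_of_le_left (inf_le_left.trans le_sup_left)]

lemma median_mem_Icc (a b c : α) :
    median a b c ∈ Set.Icc (a ⊓ b) (a ⊔ b) ∧ median a b c ∈ Set.Icc (a ⊓ c) (a ⊔ c) ∧
      median a b c ∈ Set.Icc (b ⊓ c) (b ⊔ c) := by
  refine ⟨⟨le_sup_left.trans le_sup_left, ?_⟩, ⟨le_sup_right.trans le_sup_left, ?_⟩,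
    ⟨le_sup_right, ?_⟩⟩ <;> rw [median_eq_inf_sup]
  · exact inf_le_left.trans inf_le_left
  · exact inf_le_left.trans inf_le_right
  · exact inf_le_right

lemma eq_median_of_mem_Icc {a b c x : α} (hab : x ∈ Set.Icc (a ⊓ b) (a ⊔ b))
    (hac : x ∈ Set.Icc (a ⊓ c) (a ⊔ c)) (hbc : x ∈ Set.Icc (b ⊓ c) (b ⊔ c)) :
    x = median a b c :=
  le_antisymm (median_eq_inf_sup a b c ▸ le_inf (le_inf hab.2 hac.2) hbc.2)
    (sup_le (sup_le hab.1 hac.1) hbc.1)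

end Median

lemma Finset.coe_median {α : Type*} [DecidableEq α] (s t u : Finset α) :
    ((median s t u : Finset α) : Set α) = median (s : Set α) t u := by
  simp only [median, sup_eq_union, inf_eq_inter, coe_union, coe_inter]
  rfl

lemma SimpleGraph.IsClique.median {V : Type*} {G : SimpleGraph V} {s t u : Set V}
    (hs : G.IsClique s) (ht : G.IsClique t) (hu : G.IsClique u) :
    G.IsClique (median s t u) := by
  intro x hx y hy hxy
  unfold _root_.median at hx hy
  simp only [Set.sup_eq_union, Set.inf_eq_inter, Set.mem_union, Set.mem_inter_iff] at hx hy
  have : (x ∈ s ∧ y ∈ s) ∨ (x ∈ t ∧ y ∈ t) ∨ (x ∈ u ∧ y ∈ u) := by tauto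
  rcases this with ⟨hx, hy⟩ | ⟨hx, hy⟩ | ⟨hx, hy⟩
  · exact hs hx hy hxy
  · exact ht hx hy hxy
  · exact hu hx hy hxy

namespace SimpleGraph

open Finset
open scoped Classical

variable {V : Type*} {G : SimpleGraph V}

lemma simplexGraph_adj {a b : {s : Finset V // G.IsClique (s : Set V)}} :
    (simplexGraph G).Adj a b ↔ #(a.1 ∆ b.1) = 1 := Iff.rfl

lemma card_symmDiff_le_length {a b : {s : Finset V // G.IsClique (s : Set V)}}
    (p : (simplexGraph G).Walk a b) : #(a.1 ∆ b.1) ≤ p.length := by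
  induction p with
  | nil => simp
  | @cons u v w h q ih =>
    have := card_symmDiff_le_add u.1 v.1 w.1
    have := simplexGraph_adj.1 h
    rw [Walk.length_cons]
    omega

lemma exists_walk_length_card_sdiff {a b : {s : Finset V // G.IsClique (s : Set V)}}
    (hab : a.1 ⊆ b.1) : ∃ p : (simplexGraph G).Walk a b, p.length = #(b.1 \ a.1) := by
  induction hn : #(b.1 \ a.1) generalizing b with
  | zero =>
    obtain rfl : a = b := Subtype.ext (hab.antisymm (sdiff_eq_empty_iff_subset.1
      (card_eq_zero.1 hn)))
    exact ⟨.nil, rfl⟩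
  | succ n ih =>
    obtain ⟨v, hv⟩ : (b.1 \ a.1).Nonempty := card_pos.1 (by omega)
    obtain ⟨hvb, hva⟩ := mem_sdiff.1 hv
    let b' : {s : Finset V // G.IsClique (s : Set V)} :=
      ⟨b.1.erase v, b.2.subset (by simp)⟩
    have hadj : (simplexGraph G).Adj b' b := by
      rw [simplexGraph_adj, symmDiff_of_le (erase_subset v b.1), sdiff_erase_self hvb]
      rfl
    obtain ⟨p, hp⟩ := ih (b := b') (subset_erase.2 ⟨hab, hva⟩)
      (by rw [erase_sdiff_comm, card_erase_of_mem hv, hn]; rfl)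
    exact ⟨p.concat hadj, by rw [Walk.length_concat, hp]⟩

lemma exists_walk_length_card_symmDiff (a b : {s : Finset V // G.IsClique (s : Set V)}) :
    ∃ p : (simplexGraph G).Walk a b, p.length = #(a.1 ∆ b.1) := by
  let c : {s : Finset V // G.IsClique (s : Set V)} :=
    ⟨a.1 ∩ b.1, a.2.subset (by simp [Set.inter_subset_left])⟩
  obtain ⟨p, hp⟩ := exists_walk_length_card_sdiff (b := a) (a := c) inter_subset_left
  obtain ⟨q, hq⟩ := exists_walk_length_card_sdiff (b := b) (a := c) inter_subset_right
  refine ⟨p.reverse.append q, ?_⟩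
  rw [Walk.length_append, Walk.length_reverse, hp, hq, Finset.symmDiff_def,
    card_union_of_disjoint disjoint_sdiff_sdiff, sdiff_inter_self_left, sdiff_inter_self_right]

lemma simplexGraph_connected : (simplexGraph G).Connected :=
  have : Nonempty {s : Finset V // G.IsClique (s : Set V)} := ⟨⟨∅, by simp⟩⟩
  ⟨fun a b => (exists_walk_length_card_symmDiff a b).choose.reachable⟩

lemma simplexGraph_dist (a b : {s : Finset V // G.IsClique (s : Set V)}) :
    (simplexGraph G).dist a b = #(a.1 ∆ b.1) := by
  obtain ⟨p, hp⟩ := exists_walk_length_card_symmDiff a b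
  obtain ⟨q, hq⟩ := p.reachable.exists_walk_length_eq_dist
  exact le_antisymm (hp ▸ dist_le p) (hq ▸ card_symmDiff_le_length q)

end SimpleGraph

theorem stmt0_general {V : Type*} (G : SimpleGraph V) :
    IsMedianGraph (simplexGraph G) := by
  classical
  refine ⟨simplexGraph_connected, fun a b c => ?_⟩
  have hm : G.IsClique ((median a.1 b.1 c.1 : Finset V) : Set V) :=
    (Finset.coe_median a.1 b.1 c.1).symm ▸ a.2.median b.2 c.2
  simp only [simplexGraph_dist, Finset.card_symmDiff_add_card_symmDiff_eq_iff]
  exact ⟨⟨median a.1 b.1 c.1, hm⟩, median_mem_Icc _ _ _,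
    fun x hx => Subtype.ext (eq_median_of_mem_Icc hx.1 hx.2.1 hx.2.2)⟩

/-- For any finite graph `G`, the simplex graph `S(G)` is a median graph. -/
theorem stmt0 {V : Type*} [Fintype V] (G : SimpleGraph V) :
    IsMedianGraph (simplexGraph G) :=
  stmt0_general G
end

section
/- For any finite graph G, the simplex graph S(G) is a partial cube, i.e., it embeds isometrically into a hypercube. -/
open SimpleGraph

/-!
Send a clique `s` to its indicator vector. In `S(G)`, as in `Q_n`, the graph distance is the size
of the symmetric difference: it changes by at most one along an edge, and since subsets of cliques
are cliques, one can always move from a clique towards another one, by deleting a vertex the target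
lacks or, if there is none, adding a vertex of the target. The indicator map turns symmetric
differences into Hamming distances, so it is an isometric embedding.
-/

open Finset
open scoped symmDiff

namespace SimpleGraph

variable {α : Type*} (G : SimpleGraph α) {d : α → α → ℕ}

theorem le_length_of_forall_adj (hself : ∀ a, d a a = 0)
    (hadj : ∀ a b c, G.Adj a b → d a c ≤ d b c + 1) {a b : α} (p : G.Walk a b) :
    d a b ≤ p.length := by
  induction p with
  | nil => simp [hself]
  | cons h p ih => simpa using (hadj _ _ _ h).trans (Nat.add_le_add_right ih 1)

theorem exists_walk_length_le_of_exists_adj_lt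
    (hdesc : ∀ a b, a ≠ b → ∃ c, G.Adj a c ∧ d c b < d a b) (a b : α) :
    ∃ p : G.Walk a b, p.length ≤ d a b := by
  induction h : d a b using Nat.strong_induction_on generalizing a with
  | _ n ih =>
    by_cases hab : a = b
    · subst hab
      exact ⟨.nil, Nat.zero_le _⟩
    obtain ⟨c, hac, hlt⟩ := hdesc a b hab
    obtain ⟨p, hp⟩ := ih _ (h ▸ hlt) c rfl
    exact ⟨.cons hac p, by simp only [Walk.length_cons]; omega⟩

theorem dist_eq_of_adj_le_of_exists_adj_lt (hself : ∀ a, d a a = 0)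
    (hadj : ∀ a b c, G.Adj a b → d a c ≤ d b c + 1)
    (hdesc : ∀ a b, a ≠ b → ∃ c, G.Adj a c ∧ d c b < d a b) (a b : α) :
    G.dist a b = d a b := by
  obtain ⟨p, hp⟩ := G.exists_walk_length_le_of_exists_adj_lt hdesc a b
  obtain ⟨q, hq⟩ := Reachable.exists_walk_length_eq_dist ⟨p⟩
  exact le_antisymm ((dist_le p).trans hp) (hq ▸ G.le_length_of_forall_adj hself hadj q)

end SimpleGraph

theorem cubeGraph_adj {n : ℕ} {a b : Fin n → Bool} :
    (cubeGraph n).Adj a b ↔ hammingDist a b = 1 :=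
  Iff.rfl

theorem hammingDist_update_lt {ι β : Type*} [Fintype ι] [DecidableEq ι] [DecidableEq β]
    {a b : ι → β} {i : ι} (hi : a i ≠ b i) :
    hammingDist (Function.update a i (b i)) b < hammingDist a b := by
  refine card_lt_card ⟨fun j hj => ?_, fun hsub => ?_⟩
  · have hji : j ≠ i := by rintro rfl; simp at hj
    simpa [Function.update_of_ne hji] using hj
  · simpa using hsub (show i ∈ ({j | a j ≠ b j} : Finset ι) by simpa using hi)

theorem hammingDist_update_self {ι β : Type*} [Fintype ι] [DecidableEq ι] [DecidableEq β]
    {a : ι → β} {i : ι} {x : β} (hx : a i ≠ x) :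
    hammingDist a (Function.update a i x) = 1 := by
  rw [hammingDist, card_eq_one]
  refine ⟨i, ?_⟩
  ext j
  rcases eq_or_ne j i with rfl | hji <;> simp [*]

theorem cubeGraph_dist {n : ℕ} (a b : Fin n → Bool) :
    (cubeGraph n).dist a b = hammingDist a b := by
  refine (cubeGraph n).dist_eq_of_adj_le_of_exists_adj_lt hammingDist_self (fun a b c hab => ?_)
    (fun a b hab => ?_) a b
  · exact (hammingDist_triangle a b c).trans (by rw [(cubeGraph_adj).1 hab, add_comm])
  · obtain ⟨i, hi⟩ := Function.ne_iff.1 hab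
    exact ⟨_, cubeGraph_adj.2 (hammingDist_update_self hi), hammingDist_update_lt hi⟩

theorem Finset.exists_mem_symmDiff_subset_or_subset {V : Type*} [DecidableEq V]
    {s t : Finset V} (h : s ≠ t) :
    ∃ x ∈ s ∆ t, s ∆ {x} ⊆ s ∨ s ∆ {x} ⊆ t := by
  by_cases hst : s ⊆ t
  · obtain ⟨x, hxt, hxs⟩ := exists_of_ssubset (ssubset_of_subset_of_ne hst h)
    refine ⟨x, mem_symmDiff.2 (Or.inr ⟨hxt, hxs⟩), Or.inr fun y hy => ?_⟩
    rcases eq_or_ne y x with rfl | hyx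
    · exact hxt
    · exact hst (by simpa [mem_symmDiff, hyx] using hy)
  · obtain ⟨x, hxs, hxt⟩ := not_subset.1 hst
    refine ⟨x, mem_symmDiff.2 (Or.inl ⟨hxs, hxt⟩), Or.inl fun y hy => ?_⟩
    rcases eq_or_ne y x with rfl | hyx
    · simp [mem_symmDiff, hxs] at hy
    · simpa [mem_symmDiff, hyx] using hy

theorem Finset.card_symmDiff_singleton_lt {V : Type*} [DecidableEq V] {s : Finset V} {x : V}
    (hx : x ∈ s) : #(s ∆ {x}) < #s := by
  have : s ∆ {x} = s.erase x := by
    ext y; rcases eq_or_ne y x with rfl | hyx <;> simp [mem_symmDiff, *]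
  rw [this]
  exact card_erase_lt_of_mem hx

section SimplexGraph

variable {V : Type*} [DecidableEq V] (G : SimpleGraph V)

theorem simplexGraph_adj {a b : {s : Finset V // G.IsClique (s : Set V)}} :
    (simplexGraph G).Adj a b ↔ #(a.1 ∆ b.1) = 1 := by
  unfold simplexGraph
  convert Iff.rfl

theorem simplexGraph_dist (a b : {s : Finset V // G.IsClique (s : Set V)}) :
    (simplexGraph G).dist a b = #(a.1 ∆ b.1) := by
  refine (simplexGraph G).dist_eq_of_adj_le_of_exists_adj_lt (d := fun a b => #(a.1 ∆ b.1))
    (fun a => by simp) (fun a b c hab => ?_) (fun a b hab => ?_) a b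
  · calc #(a.1 ∆ c.1) ≤ #(a.1 ∆ b.1 ∪ b.1 ∆ c.1) := card_le_card (symmDiff_triangle _ _ _)
      _ ≤ #(a.1 ∆ b.1) + #(b.1 ∆ c.1) := card_union_le _ _
      _ = #(b.1 ∆ c.1) + 1 := by rw [(simplexGraph_adj G).1 hab, add_comm]
  · obtain ⟨x, hx, hsub⟩ := exists_mem_symmDiff_subset_or_subset (Subtype.coe_ne_coe.2 hab)
    have hclique : G.IsClique ((a.1 ∆ {x} : Finset V) : Set V) := by
      rcases hsub with hsub | hsub
      · exact a.2.subset (coe_subset.2 hsub)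
      · exact b.2.subset (coe_subset.2 hsub)
    refine ⟨⟨a.1 ∆ {x}, hclique⟩, (simplexGraph_adj G).2 (by simp), ?_⟩
    simpa only [symmDiff_right_comm] using card_symmDiff_singleton_lt hx

end SimplexGraph

theorem hammingDist_decide_mem {ι V : Type*} [Fintype ι] [DecidableEq V] (e : ι ≃ V)
    (s t : Finset V) :
    hammingDist (fun i => decide (e i ∈ s)) (fun i => decide (e i ∈ t)) = #(s ∆ t) :=
  card_equiv e fun i => by
    by_cases hs : e i ∈ s <;> by_cases ht : e i ∈ t <;> simp [mem_symmDiff, *]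

/-- For any finite graph `G`, the simplex graph `S(G)` is a partial cube. -/
theorem stmt1 {V : Type*} [Fintype V] (G : SimpleGraph V) :
    IsPartialCube (simplexGraph G) := by
  classical
  let e := (Fintype.equivFin V).symm
  let f (s : {s : Finset V // G.IsClique (s : Set V)}) (i : Fin (Fintype.card V)) :=
    decide (e i ∈ s.1)
  have hdist (s t) : hammingDist (f s) (f t) = #(s.1 ∆ t.1) := hammingDist_decide_mem e _ _
  refine ⟨_, f, fun s t hst => ?_, fun s t => ?_, fun s t => ?_⟩
  · have := hdist s t
    rw [hst, hammingDist_self, eq_comm, card_eq_zero, ← bot_eq_empty, symmDiff_eq_bot] at this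
    exact Subtype.ext this
  · rw [simplexGraph_adj, cubeGraph_adj, hdist]
  · rw [simplexGraph_dist, cubeGraph_dist, hdist]
end

section
/- An induced connected subgraph H of a bipartite graph G is convex if and only if no edge of ∂H (edges with exactly one endpoint in H) is in relation Θ to an edge of H. -/
open SimpleGraph

/-!
In a bipartite graph the two ends of an edge `xy` have distances to any vertex `t` that differ
by exactly one, so every vertex lies on the `x`-side or the `y`-side of `xy`. A set `S` is convex
iff it is closed under the first step of geodesics between its vertices. If `S` is convex and
`uv` leaves `S`, then `v` is farther than `u` from every vertex of `S`, which forces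
`d(u,x) + d(v,y) = d(u,y) + d(v,x)` for all `x, y ∈ S`. Conversely, if a geodesic from `a ∈ S`
to `e ∈ S` starts with an edge `ab` leaving `S`, a path from `a` to `e` inside `S` starts on the
`a`-side of `ab` and ends on the `b`-side, so one of its edges crosses over and is in relation
`Θ` to `ab`.
-/

namespace SimpleGraph

variable {V : Type*} {G : SimpleGraph V}

theorem Reachable.even_dist_iff (c : G.Coloring Bool) {u v : V} (h : G.Reachable u v) :
    Even (G.dist u v) ↔ (c u ↔ c v) := by
  obtain ⟨p, hp⟩ := h.exists_walk_length_eq_dist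
  rw [← hp, c.even_length_iff_congr]

theorem Adj.dist_eq_add_one_or (hbip : G.Colorable 2) {x y t : V} (hxy : G.Adj x y)
    (hxt : G.Reachable x t) :
    G.dist y t = G.dist x t + 1 ∨ G.dist x t = G.dist y t + 1 := by
  obtain ⟨c⟩ := hbip
  let c' : G.Coloring Bool := recolorOfEquiv G finTwoEquiv c
  have hne : G.dist x t ≠ G.dist y t := by
    intro heq
    have hx := hxt.even_dist_iff c'
    have hy := (hxy.symm.reachable.trans hxt).even_dist_iff c'
    rw [heq, hy] at hx
    have hc : c' x ≠ c' y := c'.valid hxy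
    cases hcx : c' x <;> cases hcy : c' y <;> simp_all
  rcases hxy.diff_dist_adj (u := t) with h | h | h <;>
    rw [dist_comm (u := t), dist_comm (u := t)] at h <;> omega

end SimpleGraph

section

variable {V : Type*} {G : SimpleGraph V}

theorem convexSet_iff_forall_adj {S : Set V} :
    ConvexSet G S ↔ ∀ a ∈ S, ∀ e ∈ S, ∀ b, G.Adj a b → G.dist b e + 1 = G.dist a e → b ∈ S := by
  constructor
  · intro hconv a ha e he b hab hd
    have hbe : G.Reachable b e :=
      hab.symm.reachable.trans (Reachable.of_dist_ne_zero (by omega))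
    obtain ⟨p, hp⟩ := hbe.exists_walk_length_eq_dist
    exact hconv a ha e he (.cons hab p) (by rw [Walk.length_cons, hp, hd]) b (by simp)
  · intro hstep u hu v hv p
    induction p with
    | nil => simpa using hu
    | @cons a b e hab q ih =>
      intro hlen w hw
      rw [Walk.length_cons] at hlen
      have hq : q.length = G.dist b e := by
        have := dist_le q
        have := hab.reachable.dist_triangle_left e
        have := dist_eq_one_iff_adj.2 hab
        omega
      rw [Walk.support_cons, List.mem_cons] at hw
      rcases hw with rfl | hw
      · exact hu
      · exact ih (hstep a hu e hv b hab (by omega)) hv hq w hw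

theorem not_thetaE_of_dist_eq_add_one {u v x y : V} (hx : G.dist v x = G.dist u x + 1)
    (hy : G.dist v y = G.dist u y + 1) : ¬ThetaE G s(u, v) s(x, y) := by
  rintro ⟨u', v', x', y', he, hf, hne⟩
  rw [Sym2.eq_iff] at he hf
  rcases he with ⟨rfl, rfl⟩ | ⟨rfl, rfl⟩ <;> rcases hf with ⟨rfl, rfl⟩ | ⟨rfl, rfl⟩ <;> omega

theorem exists_adj_thetaE_of_dist_lt (hbip : G.Colorable 2) (hG : G.Connected) {S : Set V}
    (hS : (G.induce S).Preconnected) {a b e : V} (ha : a ∈ S) (he : e ∈ S) (hab : G.Adj a b)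
    (hd : G.dist b e < G.dist a e) :
    ∃ x ∈ S, ∃ y ∈ S, G.Adj x y ∧ ThetaE G s(a, b) s(x, y) := by
  obtain ⟨Q⟩ := hS ⟨a, ha⟩ ⟨e, he⟩
  obtain ⟨d, -, hx, hy⟩ := Q.exists_boundary_dart {t | G.dist b t = G.dist a t + 1}
    (by simpa using hab.symm) (by simp only [Set.mem_ofPred_eq]; omega)
  have hy' := (hab.dist_eq_add_one_or hbip (hG a d.snd)).resolve_left hy
  exact ⟨d.fst, d.fst.2, d.snd, d.snd.2, d.adj, a, b, d.fst, d.snd, rfl, rfl, by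
    simp only [Set.mem_ofPred_eq] at hx; omega⟩

end

/-- Convexity Lemma: an induced connected subgraph `H` (given by vertex set `S`) of a
bipartite graph `G` is convex iff no edge of `∂H` is in relation `Θ` to an edge of `H`. -/
theorem stmt7 {V : Type*} (G : SimpleGraph V) (hG : G.Connected) (hbip : G.Colorable 2)
    (S : Set V) (hconnS : (G.induce S).Connected) :
    ConvexSet G S ↔
      ∀ u v x y : V, u ∈ S → v ∉ S → G.Adj u v → x ∈ S → y ∈ S → G.Adj x y →
        ¬ ThetaE G s(u, v) s(x, y) := by
  rw [convexSet_iff_forall_adj]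
  constructor
  · intro hconv u v x y hu hv huv hx hy _
    have hfar : ∀ t ∈ S, G.dist v t = G.dist u t + 1 := fun t ht =>
      (huv.dist_eq_add_one_or hbip (hG u t)).resolve_right
        fun h => hv (hconv u hu t ht v huv h.symm)
    exact not_thetaE_of_dist_eq_add_one (hfar x hx) (hfar y hy)
  · intro hΘ a ha e he b hab hd
    by_contra hb
    obtain ⟨x, hx, y, hy, hxy, hθ⟩ :=
      exists_adj_thetaE_of_dist_lt hbip hG hconnS.preconnected ha he hab (by omega)
    exact hΘ a b x y ha hb hab hx hy hxy hθ
end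

section
/- Let Δ be an abstract simplicial complex on a finite set X. Then Δ is the clique complex of some graph on X if and only if for all D_1, D_2, D_3 ∈ Δ, the set M(D_1,D_2,D_3) = (D_1∩D_2) ∪ (D_1∩D_3) ∪ (D_2∩D_3) belongs to Δ. -/
open SimpleGraph

theorem SimpleGraph.IsClique.median_s16 {V : Type*} {G : SimpleGraph V} {D₁ D₂ D₃ : Set V}
    (h₁ : G.IsClique D₁) (h₂ : G.IsClique D₂) (h₃ : G.IsClique D₃) :
    G.IsClique ((D₁ ∩ D₂) ∪ (D₁ ∩ D₃) ∪ (D₂ ∩ D₃)) := by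
  -- each of the two vertices lies in two of the three cliques, so they share one
  intro a ha b hb hab
  rcases ha with (⟨ha₁, ha₂⟩ | ⟨ha₁, ha₃⟩) | ⟨ha₂, ha₃⟩ <;>
    rcases hb with (⟨hb₁, hb₂⟩ | ⟨hb₁, hb₃⟩) | ⟨hb₂, hb₃⟩ <;>
    first | exact h₁ ha₁ hb₁ hab | exact h₂ ha₂ hb₂ hab | exact h₃ ha₃ hb₃ hab

namespace Finset

variable {X : Type*} [DecidableEq X]

theorem median_erase_erase_pair {s : Finset X} {x y : X} (hx : x ∈ s) (hy : y ∈ s)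
    (hxy : x ≠ y) :
    (s.erase x ∩ s.erase y) ∪ (s.erase x ∩ {x, y}) ∪ (s.erase y ∩ {x, y}) = s := by
  ext a
  by_cases hax : a = x <;> by_cases hay : a = y <;> simp_all

def pairGraph (Δ : Finset (Finset X)) : SimpleGraph X where
  Adj x y := x ≠ y ∧ {x, y} ∈ Δ
  symm := ⟨fun x y h => ⟨h.1.symm, pair_comm x y ▸ h.2⟩⟩
  loopless := ⟨fun _ h => h.1 rfl⟩

variable {Δ : Finset (Finset X)}

theorem isClique_pairGraph_of_mem (hdown : ∀ s ∈ Δ, ∀ t, t ⊆ s → t ∈ Δ) {s : Finset X}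
    (hs : s ∈ Δ) : (pairGraph Δ).IsClique (s : Set X) :=
  fun _ ha _ hb hab => ⟨hab, hdown s hs _ (insert_subset ha (singleton_subset_iff.2 hb))⟩

/-- A clique `s` with two distinct vertices `x, y` is the median of the smaller cliques
`s \ {x}`, `s \ {y}` and the edge `{x, y}`; this drives an induction on `s`. -/
theorem mem_of_isClique_pairGraph (hempty : (∅ : Finset X) ∈ Δ) (hvert : ∀ x : X, {x} ∈ Δ)
    (hmed : ∀ D₁ ∈ Δ, ∀ D₂ ∈ Δ, ∀ D₃ ∈ Δ, (D₁ ∩ D₂) ∪ (D₁ ∩ D₃) ∪ (D₂ ∩ D₃) ∈ Δ)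
    (s : Finset X) (hs : (pairGraph Δ).IsClique (s : Set X)) : s ∈ Δ := by
  induction s using Finset.strongInduction with
  | H s ih =>
    obtain rfl | ⟨z, hz⟩ := s.eq_empty_or_nonempty
    · exact hempty
    obtain rfl | ⟨x, hx, y, hy, hxy⟩ := s.eq_singleton_or_nontrivial hz
    · exact hvert z
    have erase_mem : ∀ w ∈ s, s.erase w ∈ Δ := fun w hw =>
      ih _ (erase_ssubset hw) (hs.subset (coe_subset.2 (erase_subset w s)))
    simpa only [median_erase_erase_pair hx hy hxy] using
      hmed _ (erase_mem x hx) _ (erase_mem y hy) _ (hs hx hy hxy).2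

end Finset

theorem stmt16_general {X : Type*} [DecidableEq X] (Δ : Finset (Finset X))
    (hdown : ∀ s ∈ Δ, ∀ t, t ⊆ s → t ∈ Δ) (hempty : (∅ : Finset X) ∈ Δ)
    (hvert : ∀ x : X, {x} ∈ Δ) :
    (∃ G : SimpleGraph X, ∀ s : Finset X, s ∈ Δ ↔ G.IsClique (↑s : Set X)) ↔
      (∀ D1 ∈ Δ, ∀ D2 ∈ Δ, ∀ D3 ∈ Δ,
        (D1 ∩ D2) ∪ (D1 ∩ D3) ∪ (D2 ∩ D3) ∈ Δ) := by
  constructor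
  · rintro ⟨G, hG⟩ D₁ h₁ D₂ h₂ D₃ h₃
    rw [hG] at h₁ h₂ h₃ ⊢
    push_cast
    exact h₁.median_s16 h₂ h₃
  · intro hmed
    exact ⟨Finset.pairGraph Δ, fun s => ⟨Finset.isClique_pairGraph_of_mem hdown,
      Finset.mem_of_isClique_pairGraph hempty hvert hmed s⟩⟩

/-- An abstract simplicial complex on a finite set `X` is the clique complex of some
graph on `X` iff it satisfies the Median Property. -/
theorem stmt16 {X : Type*} [Fintype X] [DecidableEq X] (Δ : Finset (Finset X))
    (hdown : ∀ s ∈ Δ, ∀ t, t ⊆ s → t ∈ Δ) (hempty : (∅ : Finset X) ∈ Δ)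
    (hvert : ∀ x : X, {x} ∈ Δ) :
    (∃ G : SimpleGraph X, ∀ s : Finset X, s ∈ Δ ↔ G.IsClique (↑s : Set X)) ↔
      (∀ D1 ∈ Δ, ∀ D2 ∈ Δ, ∀ D3 ∈ Δ,
        (D1 ∩ D2) ∪ (D1 ∩ D3) ∪ (D2 ∩ D3) ∈ Δ) :=
  stmt16_general Δ hdown hempty hvert
end

section
/- Let Δ be an abstract simplicial complex on a finite set X. Then Δ satisfies the Median Property (M(D_1,D_2,D_3) ∈ Δ for all faces D_1,D_2,D_3) if and only if it satisfies the Weak Median Property (M(E_1,E_2,E_3) ∈ Δ for all facets E_1,E_2,E_3). -/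
open SimpleGraph

theorem Finset.exists_subset_facet {α : Type*} {Δ : Finset (Finset α)} {D : Finset α}
    (hD : D ∈ Δ) : ∃ E ∈ Δ, D ⊆ E ∧ ∀ F ∈ Δ, E ⊆ F → E = F := by
  obtain ⟨E, hDE, hE⟩ := Δ.exists_le_maximal hD
  exact ⟨E, hE.prop, hDE, fun _ hF hEF => hE.eq_of_le hF hEF⟩

theorem Finset.median_subset_median {α : Type*} [DecidableEq α] {A B C A' B' C' : Finset α}
    (hA : A ⊆ A') (hB : B ⊆ B') (hC : C ⊆ C') :
    (A ∩ B) ∪ (A ∩ C) ∪ (B ∩ C) ⊆ (A' ∩ B') ∪ (A' ∩ C') ∪ (B' ∩ C') := by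
  gcongr

theorem stmt17_general {X : Type*} [DecidableEq X] (Δ : Finset (Finset X))
    (hdown : ∀ s ∈ Δ, ∀ t, t ⊆ s → t ∈ Δ) :
    (∀ D1 ∈ Δ, ∀ D2 ∈ Δ, ∀ D3 ∈ Δ,
      (D1 ∩ D2) ∪ (D1 ∩ D3) ∪ (D2 ∩ D3) ∈ Δ) ↔
    (∀ E1 ∈ Δ, ∀ E2 ∈ Δ, ∀ E3 ∈ Δ,
      (∀ F ∈ Δ, E1 ⊆ F → E1 = F) → (∀ F ∈ Δ, E2 ⊆ F → E2 = F) →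
      (∀ F ∈ Δ, E3 ⊆ F → E3 = F) →
      (E1 ∩ E2) ∪ (E1 ∩ E3) ∪ (E2 ∩ E3) ∈ Δ) := by
  refine ⟨fun h E1 h1 E2 h2 E3 h3 _ _ _ => h E1 h1 E2 h2 E3 h3, fun h D1 h1 D2 h2 D3 h3 => ?_⟩
  obtain ⟨E1, hE1, hD1, hm1⟩ := Finset.exists_subset_facet h1
  obtain ⟨E2, hE2, hD2, hm2⟩ := Finset.exists_subset_facet h2
  obtain ⟨E3, hE3, hD3, hm3⟩ := Finset.exists_subset_facet h3
  exact hdown _ (h E1 hE1 E2 hE2 E3 hE3 hm1 hm2 hm3) _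
    (Finset.median_subset_median hD1 hD2 hD3)

/-- For an abstract simplicial complex on a finite set, the Median Property is
equivalent to the Weak Median Property (stated for facets only). -/
theorem stmt17 {X : Type*} [Fintype X] [DecidableEq X] (Δ : Finset (Finset X))
    (hdown : ∀ s ∈ Δ, ∀ t, t ⊆ s → t ∈ Δ) :
    (∀ D1 ∈ Δ, ∀ D2 ∈ Δ, ∀ D3 ∈ Δ,
      (D1 ∩ D2) ∪ (D1 ∩ D3) ∪ (D2 ∩ D3) ∈ Δ) ↔
    (∀ E1 ∈ Δ, ∀ E2 ∈ Δ, ∀ E3 ∈ Δ,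
      (∀ F ∈ Δ, E1 ⊆ F → E1 = F) → (∀ F ∈ Δ, E2 ⊆ F → E2 = F) →
      (∀ F ∈ Δ, E3 ⊆ F → E3 = F) →
      (E1 ∩ E2) ∪ (E1 ∩ E3) ∪ (E2 ∩ E3) ∈ Δ) :=
  stmt17_general Δ hdown
end
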